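/- Let A be a group, I a linearly ordered set, and let B be the free abelian group on I (written multiplicatively, with generators x_i for i ∈ I). Suppose there exist automorphisms ψ_{i,ε} of A for each i ∈ I and sign ε ∈ {+1,−1}, and elements F(p,ε;q,δ) ∈ A for each pair p > q in I and signs ε, δ ∈ {+1,−1}, satisfying for all p > q > r in I, all signs ε, δ, γ, and all a ∈ A: (1) F(p,ε;q,δ) · ψ_{q,δ}(F(p,ε;r,γ)) · F(q,δ;r,γ) = ψ_{p,ε}(F(q,δ;r,γ)) · F(p,ε;r,γ) · ψ_{r,γ}(F(p,ε;q,δ)); (2) F(p,ε;q,−δ) · ψ_{q,−δ}(F(p,ε;q,δ)) = 1; (3) ψ_{p,−ε}(F(p,ε;q,δ)) · F(p,−ε;q,δ) = 1; (4) ψ_{p,ε}(ψ_{q,δ}(a)) · F(p,ε;q,δ) = F(p,ε;q,δ) · ψ_{q,δ}(ψ_{p,ε}(a)); (5) ψ_{r,−ε}(ψ_{r,ε}(a)) = a. Then there exist a group G, an injective group homomorphism ι : A → G, a surjective group homomorphism π : G → B with image of ι equal to the kernel of π, and a map s : I → G such that for all i ∈ I, π(s(i)) = x_i, ι(a)·s(i)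 = s(i)·ι(ψ_{i,+1}(a)) and ι(a)·s(i)⁻¹ = s(i)⁻¹·ι(ψ_{i,−1}(a)) for all a ∈ A, and for all p > q in I and signs ε, δ: s(p)^ε · s(q)^δ = s(q)^δ · s(p)^ε · ι(F(p,ε;q,δ)), where s(i)^{+1} := s(i) and s(i)^{−1} := s(i)⁻¹. In particular, G is a Schreier extension of A by the free abelian group B. -/

import Mathlib

universe u v

set_option linter.unusedSectionVars false

namespace Schreier1843

variable {A : Type u} [Group A] {I : Type v} [LinearOrder I]

variable (ψ : I → ℤˣ → MulAut A) (F : I → ℤˣ → I → ℤˣ → A)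

lemma psi_neg_one
    (h5 : ∀ (r : I) (ε : ℤˣ) (a : A), ψ r (-ε) (ψ r ε a) = a) (i : I) :
    ψ i (-1) = (ψ i 1)⁻¹ := by
  ext a
  apply (ψ i 1).injective
  have h := h5 i (-1) a
  norm_num at h
  rw [h]
  simp

lemma psi_zpow
    (h5 : ∀ (r : I) (ε : ℤˣ) (a : A), ψ r (-ε) (ψ r ε a) = a) (i : I) (ε : ℤˣ) :
    ψ i ε = (ψ i 1) ^ (ε : ℤ) := by
  rcases Int.units_eq_one_or ε with h | h <;> subst h
  · simp
  · rw [psi_neg_one ψ h5 i]; simp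

/-- `cNat p ε q n` : the factor accumulated when pushing `s p ^ ε` from the left
through `s q ^ n` (`n ≥ 0`, `p < q`). -/
def cNat (p : I) (ε : ℤˣ) (q : I) : ℕ → A
  | 0 => 1
  | n+1 => cNat p ε q n * (((ψ q 1) ^ (n : ℤ)) (F q 1 p ε))⁻¹

def cNeg (p : I) (ε : ℤˣ) (q : I) : ℕ → A
  | 0 => 1
  | n+1 => cNeg p ε q n * (((ψ q 1) ^ (-(n : ℤ))) (F q (-1) p ε))⁻¹

def cZ (p : I) (ε : ℤˣ) (q : I) : ℤ → A
  | .ofNat n => cNat ψ F p ε q n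
  | .negSucc n => cNeg ψ F p ε q (n+1)

lemma cZ_zero (p : I) (ε : ℤˣ) (q : I) : cZ ψ F p ε q 0 = 1 := rfl

lemma cZ_neg_eq (p : I) (ε : ℤˣ) (q : I) (n : ℕ) :
    cZ ψ F p ε q (-(n : ℤ)) = cNeg ψ F p ε q n := by
  cases n with
  | zero => rfl
  | succ m => show cZ ψ F p ε q (Int.negSucc m) = _ ; rfl

lemma cZ_ofNat (p : I) (ε : ℤˣ) (q : I) (n : ℕ) :
    cZ ψ F p ε q (n : ℤ) = cNat ψ F p ε q n := rfl

section gAux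

/-- The cocycle correction when pushing `s p ^ ε` from the left through the
descending word indexed by `L` with exponents `v`. -/
def gAux (p : I) (ε : ℤˣ) (v : I → ℤ) : List I → A
  | [] => 1
  | q :: L => ((ψ q 1)^(-(v q))) (ψ p (-ε) (cZ ψ F p ε q (v q)) * gAux p ε v L)

lemma gAux_nil (p : I) (ε : ℤˣ) (v : I → ℤ) : gAux ψ F p ε v [] = 1 := rfl

lemma gAux_cons (p : I) (ε : ℤˣ) (v : I → ℤ) (q : I) (L : List I) :
    gAux ψ F p ε v (q :: L)
      = ((ψ q 1)^(-(v q)))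
          (ψ p (-ε) (cZ ψ F p ε q (v q)) * gAux ψ F p ε v L) := rfl

lemma gAux_congr (p : I) (ε : ℤˣ) {v w : I → ℤ} {L : List I}
    (h : ∀ i ∈ L, v i = w i) : gAux ψ F p ε v L = gAux ψ F p ε w L := by
  induction L with
  | nil => rfl
  | cons q L ih =>
      rw [gAux_cons, gAux_cons, h q List.mem_cons_self,
        ih fun i hi => h i (List.mem_cons_of_mem q hi)]

lemma gAux_cons_zero (p : I) (ε : ℤˣ) {v : I → ℤ} {q : I} (L : List I)
    (hq : v q = 0) : gAux ψ F p ε v (q :: L) = gAux ψ F p ε v L := by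
  rw [gAux_cons, hq, cZ_zero, map_one, one_mul, neg_zero, zpow_zero]
  rfl

lemma gAux_filter (p : I) (ε : ℤˣ) (v : I → ℤ) (L : List I) :
    gAux ψ F p ε v L = gAux ψ F p ε v (L.filter (fun i => v i ≠ 0)) := by
  induction L with
  | nil => rfl
  | cons q L ih =>
      by_cases hq : v q = 0
      · rw [gAux_cons_zero ψ F p ε L hq, ih, List.filter_cons_of_neg (by simp [hq])]
      · rw [List.filter_cons_of_pos (by simp [hq]), gAux_cons, gAux_cons, ih]

end gAux

end Schreier1843

namespace Schreier1843

variable {A : Type u} [Group A] {I : Type v} [LinearOrder I]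
variable (ψ : I → ℤˣ → MulAut A) (F : I → ℤˣ → I → ℤˣ → A)

section cLemmas

variable (h3 : ∀ p q : I, q < p → ∀ ε δ : ℤˣ,
      ψ p (-ε) (F p ε q δ) * F p (-ε) q δ = 1)
    (h5 : ∀ (r : I) (ε : ℤˣ) (a : A), ψ r (-ε) (ψ r ε a) = a)
    {p q : I} (hpq : p < q) (ε : ℤˣ)

include h3 h5 hpq

lemma F_neg_big : F q (-1) p ε = (((ψ q 1)⁻¹ : MulAut A) (F q 1 p ε))⁻¹ := by
  have h := h3 q p hpq 1 ε
  rw [psi_neg_one ψ h5 q] at h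
  exact eq_inv_of_mul_eq_one_right h

lemma cZ_succ (n : ℤ) :
    cZ ψ F p ε q (n + 1)
      = cZ ψ F p ε q n * (((ψ q 1) ^ n) (F q 1 p ε))⁻¹ := by
  cases n with
  | ofNat m =>
      show cZ ψ F p ε q (Int.ofNat m + 1) = cZ ψ F p ε q (Int.ofNat m) * _
      rw [show Int.ofNat m + 1 = Int.ofNat (m+1) by rfl]
      rfl
  | negSucc m =>
      have e1 : (Int.negSucc m) + 1 = -(m : ℤ) := by
        rw [Int.negSucc_eq]; ring
      have e2 : (Int.negSucc m) = -((m+1 : ℕ) : ℤ) := by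
        rw [Int.negSucc_eq]; push_cast; ring
      have e3 : ((ψ q 1) ^ (-(m:ℤ))) (((ψ q 1)⁻¹ : MulAut A) (F q 1 p ε))
          = ((ψ q 1) ^ (-((m+1:ℕ):ℤ))) (F q 1 p ε) := by
        rw [← MulAut.mul_apply, ← zpow_neg_one, ← zpow_add]
        congr 2
        push_cast; ring
      rw [e1, e2, cZ_neg_eq, cZ_neg_eq]
      show cNeg ψ F p ε q m
        = cNeg ψ F p ε q m * (((ψ q 1) ^ (-(m:ℤ))) (F q (-1) p ε))⁻¹ * _
      rw [F_neg_big ψ F h3 h5 hpq ε, map_inv, inv_inv, e3, mul_assoc]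
      simp

lemma cZ_succ' (n : ℤ) :
    cZ ψ F p ε q (n + 1)
      = (F q 1 p ε)⁻¹ * (ψ q 1) (cZ ψ F p ε q n) := by
  induction n using Int.induction_on with
  | zero =>
      have h0 := cZ_succ ψ F h3 h5 hpq ε 0
      rw [zero_add] at h0
      rw [zero_add, h0, cZ_zero]
      simp
  | succ m ih =>
      have hs1 := cZ_succ ψ F h3 h5 hpq ε ((m:ℤ)+1)
      have hs0 := cZ_succ ψ F h3 h5 hpq ε (m:ℤ)
      have e : (ψ q 1) (((ψ q 1)^(m:ℤ)) (F q 1 p ε))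
          = ((ψ q 1)^((m:ℤ)+1)) (F q 1 p ε) := by
        rw [← MulAut.mul_apply, ← zpow_one_add, add_comm]
      conv_lhs => rw [hs1, ih]
      conv_rhs => rw [hs0, map_mul, map_inv]
      rw [e, mul_assoc]
  | pred m ih =>
      have hs := cZ_succ ψ F h3 h5 hpq ε (-(m:ℤ)-1)
      rw [show -(m:ℤ)-1+1 = -(m:ℤ) by ring] at hs
      have hs2 : cZ ψ F p ε q (-(m:ℤ)-1)
          = cZ ψ F p ε q (-(m:ℤ)) * ((ψ q 1)^(-(m:ℤ)-1)) (F q 1 p ε) := by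
        rw [hs]; group
      have hs0 := cZ_succ ψ F h3 h5 hpq ε (-(m:ℤ))
      have e : (ψ q 1) (((ψ q 1)^(-(m:ℤ)-1)) (F q 1 p ε))
          = ((ψ q 1)^(-(m:ℤ))) (F q 1 p ε) := by
        rw [← MulAut.mul_apply, ← zpow_one_add]
        congr 2
        ring
      rw [show -(m:ℤ)-1+1 = -(m:ℤ) by ring, hs2, map_mul, ← mul_assoc, ← ih,
        hs0, e]
      simp

lemma cZ_pred (n : ℤ) :
    cZ ψ F p ε q (n - 1)
      = cZ ψ F p ε q n * ((ψ q 1) ^ (n-1)) (F q 1 p ε) := by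
  have h := cZ_succ ψ F h3 h5 hpq ε (n-1)
  rw [sub_add_cancel] at h
  rw [h]; group

end cLemmas

lemma zpow_apply_zpow (f : MulAut A) (a b : ℤ) (x : A) :
    (f ^ a) ((f ^ b) x) = (f ^ (a + b)) x := by
  rw [← MulAut.mul_apply, ← zpow_add]

section conjLemmas

variable (h3 : ∀ p q : I, q < p → ∀ ε δ : ℤˣ,
      ψ p (-ε) (F p ε q δ) * F p (-ε) q δ = 1)
    (h4 : ∀ p q : I, q < p → ∀ (ε δ : ℤˣ) (a : A),
      ψ p ε (ψ q δ a) * F p ε q δ = F p ε q δ * ψ q δ (ψ p ε a))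
    (h5 : ∀ (r : I) (ε : ℤˣ) (a : A), ψ r (-ε) (ψ r ε a) = a)
    {p q : I} (hpq : p < q) (ε : ℤˣ)

include h3 h4 h5 hpq

/-- (L1): commuting `ψ p ε` past a power of `ψ q 1` conjugates by `cZ`. -/
lemma conj_zpow (n : ℤ) (x : A) :
    ψ p ε (((ψ q 1) ^ n) x)
      = cZ ψ F p ε q n * (((ψ q 1) ^ n) (ψ p ε x)) * (cZ ψ F p ε q n)⁻¹ := by
  have hconj : ∀ y : A, ψ p ε ((ψ q 1) y)
      = (F q 1 p ε)⁻¹ * ((ψ q 1) (ψ p ε y)) * (F q 1 p ε) := by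
    intro y
    have h := h4 q p hpq 1 ε y
    rw [mul_assoc, h]; group
  have hconjinv : ∀ y : A, ψ p ε (((ψ q 1)⁻¹ : MulAut A) y)
      = ((ψ q 1)⁻¹ : MulAut A) ((F q 1 p ε) * (ψ p ε y) * (F q 1 p ε)⁻¹) := by
    intro y
    have h := hconj (((ψ q 1)⁻¹ : MulAut A) y)
    rw [MulAut.apply_inv_self] at h
    apply ((ψ q 1)).injective
    rw [MulAut.apply_inv_self, h]
    group
  induction n using Int.induction_on with
  | zero => simp [cZ_zero]
  | succ m ih =>
      have e1 : ((ψ q 1) ^ ((m:ℤ)+1)) x = (ψ q 1) (((ψ q 1) ^ (m:ℤ)) x) := by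
        rw [← MulAut.mul_apply, ← zpow_one_add, add_comm]
      have e2 : ∀ y : A, (ψ q 1) (((ψ q 1) ^ (m:ℤ)) y)
          = ((ψ q 1) ^ ((m:ℤ)+1)) y := by
        intro y; rw [← MulAut.mul_apply, ← zpow_one_add, add_comm]
      rw [e1, hconj, ih, cZ_succ' ψ F h3 h5 hpq ε (m:ℤ)]
      rw [map_mul, map_mul, map_inv, e2]
      group
  | pred m ih =>
      have e1 : ((ψ q 1) ^ (-(m:ℤ)-1)) x
          = ((ψ q 1)⁻¹ : MulAut A) (((ψ q 1) ^ (-(m:ℤ))) x) := by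
        rw [← MulAut.mul_apply, ← zpow_neg_one, ← zpow_add]
        congr 2; ring
      have e2 : ∀ y : A, ((ψ q 1)⁻¹ : MulAut A) (((ψ q 1) ^ (-(m:ℤ))) y)
          = ((ψ q 1) ^ (-(m:ℤ)-1)) y := by
        intro y
        rw [← MulAut.mul_apply, ← zpow_neg_one, ← zpow_add]
        congr 2; ring
      have e3 : cZ ψ F p ε q (-(m:ℤ)-1)
          = ((ψ q 1)⁻¹ : MulAut A) ((F q 1 p ε) * cZ ψ F p ε q (-(m:ℤ))) := by
        have h := cZ_succ' ψ F h3 h5 hpq ε (-(m:ℤ)-1)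
        rw [sub_add_cancel] at h
        apply ((ψ q 1)).injective
        rw [MulAut.apply_inv_self, h]
        group
      rw [e1, hconjinv, ih, e3]
      simp only [map_mul, map_inv]
      rw [e2]
      group

end conjLemmas

section negLemmas

variable (h3 : ∀ p q : I, q < p → ∀ ε δ : ℤˣ,
      ψ p (-ε) (F p ε q δ) * F p (-ε) q δ = 1)
    (h5 : ∀ (r : I) (ε : ℤˣ) (a : A), ψ r (-ε) (ψ r ε a) = a)
    {p q : I} (hpq : p < q) (ε : ℤˣ)

include h3 h5 hpq

/-- (L2) -/
lemma cZ_neg (n : ℤ) :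
    cZ ψ F p ε q (-n) = (((ψ q 1) ^ (-n)) (cZ ψ F p ε q n))⁻¹ := by
  -- key identity (**): ψ (c(-m)) * ψ^{-m}(F) = F * c(-m)
  have key : ∀ m : ℤ, (ψ q 1) (cZ ψ F p ε q m) * ((ψ q 1) ^ m) (F q 1 p ε)
      = F q 1 p ε * cZ ψ F p ε q m := by
    intro m
    have h1' := cZ_succ' ψ F h3 h5 hpq ε (m-1)
    rw [sub_add_cancel] at h1'
    have h2' := cZ_pred ψ F h3 h5 hpq ε m
    rw [h2'] at h1'
    rw [map_mul] at h1'
    have : (ψ q 1) (((ψ q 1) ^ (m - 1)) (F q 1 p ε))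
        = ((ψ q 1) ^ m) (F q 1 p ε) := by
      rw [← MulAut.mul_apply, ← zpow_one_add]
      congr 2; ring
    rw [this] at h1'
    conv_rhs => rw [h1']
    group
  induction n using Int.induction_on with
  | zero => simp [cZ_zero]
  | succ m ih =>
      have hc := cZ_pred ψ F h3 h5 hpq ε (-(m:ℤ))
      have hcs := cZ_succ ψ F h3 h5 hpq ε (m:ℤ)
      have hkey := key (m:ℤ)
      have e1 : ((ψ q 1) ^ (-(m:ℤ)-1)) (((ψ q 1)^(m:ℤ)) (F q 1 p ε))
          = ((ψ q 1)⁻¹ : MulAut A) (F q 1 p ε) := by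
        rw [zpow_apply_zpow, show (-(m:ℤ)-1+(m:ℤ)) = -1 by ring, zpow_neg_one]
      have e2 : ((ψ q 1) ^ (-(m:ℤ))) (cZ ψ F p ε q (m:ℤ))
          = ((ψ q 1)^(-(m:ℤ)-1)) ((ψ q 1) (cZ ψ F p ε q (m:ℤ))) := by
        conv_rhs =>
          rw [show (ψ q 1) (cZ ψ F p ε q (m:ℤ))
            = ((ψ q 1)^(1:ℤ)) (cZ ψ F p ε q (m:ℤ)) by rw [zpow_one]]
        rw [zpow_apply_zpow, show (-(m:ℤ)-1+1) = -(m:ℤ) by ring]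
      have e3 : ((ψ q 1)^(-(m:ℤ)-1)) ((ψ q 1) (cZ ψ F p ε q (m:ℤ)))
            * ((ψ q 1)⁻¹ : MulAut A) (F q 1 p ε)
          = ((ψ q 1)^(-(m:ℤ)-1)) (F q 1 p ε)
            * ((ψ q 1)^(-(m:ℤ)-1)) (cZ ψ F p ε q (m:ℤ)) := by
        rw [← e1, ← map_mul, ← map_mul, hkey]
      rw [show -((m:ℤ)+1) = -(m:ℤ)-1 by ring, hc, ih, hcs, map_mul, map_inv,
        e1, e2]
      calc (((ψ q 1)^(-(m:ℤ)-1)) ((ψ q 1) (cZ ψ F p ε q (m:ℤ))))⁻¹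
            * ((ψ q 1)^(-(m:ℤ)-1)) (F q 1 p ε)
          = (((ψ q 1)^(-(m:ℤ)-1)) ((ψ q 1) (cZ ψ F p ε q (m:ℤ))))⁻¹
            * (((ψ q 1)^(-(m:ℤ)-1)) (F q 1 p ε)
              * ((ψ q 1)^(-(m:ℤ)-1)) (cZ ψ F p ε q (m:ℤ)))
            * (((ψ q 1)^(-(m:ℤ)-1)) (cZ ψ F p ε q (m:ℤ)))⁻¹ := by group
        _ = (((ψ q 1)^(-(m:ℤ)-1)) ((ψ q 1) (cZ ψ F p ε q (m:ℤ))))⁻¹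
            * (((ψ q 1)^(-(m:ℤ)-1)) ((ψ q 1) (cZ ψ F p ε q (m:ℤ)))
              * ((ψ q 1)⁻¹ : MulAut A) (F q 1 p ε))
            * (((ψ q 1)^(-(m:ℤ)-1)) (cZ ψ F p ε q (m:ℤ)))⁻¹ := by rw [e3]
        _ = (((ψ q 1)^(-(m:ℤ)-1)) (cZ ψ F p ε q (m:ℤ))
              * (((ψ q 1)⁻¹ : MulAut A) (F q 1 p ε))⁻¹)⁻¹ := by group
  | pred m ih =>
      rw [neg_neg] at ih
      have hcs := cZ_succ ψ F h3 h5 hpq ε (m:ℤ)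
      have hc := cZ_pred ψ F h3 h5 hpq ε (-(m:ℤ))
      have hkey := key (m:ℤ)
      have e1 : ((ψ q 1)^((m:ℤ)+1)) (((ψ q 1)^(-(m:ℤ)-1)) (F q 1 p ε))
          = F q 1 p ε := by
        rw [zpow_apply_zpow, show ((m:ℤ)+1+(-(m:ℤ)-1)) = 0 by ring, zpow_zero]
        rfl
      have e4 : ((ψ q 1)^(m:ℤ)) (cZ ψ F p ε q (-(m:ℤ)))
          = (cZ ψ F p ε q (m:ℤ))⁻¹ := by
        rw [ih, inv_inv]
      have e3 : ((ψ q 1)^((m:ℤ)+1)) (cZ ψ F p ε q (-(m:ℤ)))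
          = (ψ q 1) ((cZ ψ F p ε q (m:ℤ))⁻¹) := by
        rw [show ((m:ℤ)+1) = 1+(m:ℤ) by ring, ← zpow_apply_zpow, zpow_one, e4]
      rw [show -(-(m:ℤ)-1) = (m:ℤ)+1 by ring, hcs, hc, map_mul, e1, e3,
        map_inv]
      calc cZ ψ F p ε q (m:ℤ) * (((ψ q 1)^(m:ℤ)) (F q 1 p ε))⁻¹
          = (F q 1 p ε)⁻¹
            * ((ψ q 1) (cZ ψ F p ε q (m:ℤ)) * ((ψ q 1)^(m:ℤ)) (F q 1 p ε))
            * (((ψ q 1)^(m:ℤ)) (F q 1 p ε))⁻¹ := by rw [hkey]; group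
        _ = (((ψ q 1) (cZ ψ F p ε q (m:ℤ)))⁻¹ * F q 1 p ε)⁻¹ := by group

end negLemmas

section flipLemmas

variable (h2 : ∀ p q : I, q < p → ∀ ε δ : ℤˣ,
      F p ε q (-δ) * ψ q (-δ) (F p ε q δ) = 1)
    (h3 : ∀ p q : I, q < p → ∀ ε δ : ℤˣ,
      ψ p (-ε) (F p ε q δ) * F p (-ε) q δ = 1)
    (h4 : ∀ p q : I, q < p → ∀ (ε δ : ℤˣ) (a : A),
      ψ p ε (ψ q δ a) * F p ε q δ = F p ε q δ * ψ q δ (ψ p ε a))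
    (h5 : ∀ (r : I) (ε : ℤˣ) (a : A), ψ r (-ε) (ψ r ε a) = a)
    {p q : I} (hpq : p < q) (ε : ℤˣ)

include h2 h3 h4 h5 hpq

/-- (L3') -/
lemma cZ_flip (n : ℤ) :
    ψ p ε (cZ ψ F p (-ε) q n) = (cZ ψ F p ε q n)⁻¹ := by
  have hF2 : ψ p ε (F q 1 p (-ε)) = (F q 1 p ε)⁻¹ := by
    have h := h2 q p hpq 1 (-ε)
    rw [neg_neg] at h
    exact eq_inv_of_mul_eq_one_right h
  induction n using Int.induction_on with
  | zero => simp [cZ_zero]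
  | succ m ih =>
      rw [cZ_succ ψ F h3 h5 hpq (-ε) (m:ℤ), cZ_succ ψ F h3 h5 hpq ε (m:ℤ),
        map_mul, map_inv, ih,
        conj_zpow ψ F h3 h4 h5 hpq ε (m:ℤ) (F q 1 p (-ε)), hF2, map_inv]
      group
  | pred m ih =>
      rw [cZ_pred ψ F h3 h5 hpq (-ε) (-(m:ℤ)), map_mul, ih,
        conj_zpow ψ F h3 h4 h5 hpq ε (-(m:ℤ)-1) (F q 1 p (-ε)), hF2,
        cZ_pred ψ F h3 h5 hpq ε (-(m:ℤ)), map_inv]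
      group

end flipLemmas

section pentagon

variable (h1 : ∀ p q r : I, r < q → q < p → ∀ ε δ γ : ℤˣ,
      F p ε q δ * ψ q δ (F p ε r γ) * F q δ r γ
        = ψ p ε (F q δ r γ) * F p ε r γ * ψ r γ (F p ε q δ))
    (h3 : ∀ p q : I, q < p → ∀ ε δ : ℤˣ,
      ψ p (-ε) (F p ε q δ) * F p (-ε) q δ = 1)
    (h4 : ∀ p q : I, q < p → ∀ (ε δ : ℤˣ) (a : A),
      ψ p ε (ψ q δ a) * F p ε q δ = F p ε q δ * ψ q δ (ψ p ε a))
    (h5 : ∀ (r : I) (ε : ℤˣ) (a : A), ψ r (-ε) (ψ r ε a) = a)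
    {p q r : I} (hqp : q < p) (hpr : p < r) (ε δ : ℤˣ)

include h1 h3 h4 h5 hqp hpr

/-- (L5') the main inductive consequence of the cocycle identity `h1`. -/
lemma cZ_pentagon (m : ℤ) :
    ψ p ε (cZ ψ F q δ r m) * cZ ψ F p ε r m * ((ψ r 1)^m) (F p ε q δ)
      = F p ε q δ * ψ q δ (cZ ψ F p ε r m) * cZ ψ F q δ r m := by
  have hqr : q < r := hqp.trans hpr
  have hKey := h1 r p q hqp hpr 1 ε δ
  have hPhiFb : F r 1 p ε * ψ p ε (F r 1 q δ) * F p ε q δ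
        * (ψ q δ (F r 1 p ε))⁻¹ * (F r 1 q δ)⁻¹
      = (ψ r 1) (F p ε q δ) := by
    rw [hKey]; group
  induction m using Int.induction_on with
  | zero => simp [cZ_zero]
  | succ m ih =>
      have hCq := cZ_succ ψ F h3 h5 hqr δ (m:ℤ)
      have hCp := cZ_succ ψ F h3 h5 hpr ε (m:ℤ)
      have hLp := conj_zpow ψ F h3 h4 h5 hpr ε (m:ℤ) (F r 1 q δ)
      have hLq := conj_zpow ψ F h3 h4 h5 hqr δ (m:ℤ) (F r 1 p ε)
      have hsplit : ((ψ r 1)^((m:ℤ)+1)) (F p ε q δ)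
          = ((ψ r 1)^(m:ℤ)) ((ψ r 1) (F p ε q δ)) := by
        conv_rhs =>
          rw [show (ψ r 1) (F p ε q δ)
            = ((ψ r 1)^(1:ℤ)) (F p ε q δ) by rw [zpow_one]]
        rw [zpow_apply_zpow]
      have eL : ψ p ε (cZ ψ F q δ r ((m:ℤ)+1)) * cZ ψ F p ε r ((m:ℤ)+1)
            * ((ψ r 1)^((m:ℤ)+1)) (F p ε q δ)
          = (ψ p ε (cZ ψ F q δ r (m:ℤ)) * cZ ψ F p ε r (m:ℤ)
              * ((ψ r 1)^(m:ℤ)) (F p ε q δ))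
            * (((ψ r 1)^(m:ℤ)) (ψ q δ (F r 1 p ε)))⁻¹
            * (((ψ r 1)^(m:ℤ)) (F r 1 q δ))⁻¹ := by
        rw [hCq, hCp, hsplit, ← hPhiFb]
        simp only [map_mul, map_inv]
        rw [hLp]
        group
      have eR : F p ε q δ * ψ q δ (cZ ψ F p ε r ((m:ℤ)+1))
            * cZ ψ F q δ r ((m:ℤ)+1)
          = (F p ε q δ * ψ q δ (cZ ψ F p ε r (m:ℤ)) * cZ ψ F q δ r (m:ℤ))
            * (((ψ r 1)^(m:ℤ)) (ψ q δ (F r 1 p ε)))⁻¹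
            * (((ψ r 1)^(m:ℤ)) (F r 1 q δ))⁻¹ := by
        rw [hCp, hCq]
        simp only [map_mul, map_inv]
        rw [hLq]
        group
      rw [eL, eR, ih]
  | pred m ih =>
      have hCq := cZ_pred ψ F h3 h5 hqr δ (-(m:ℤ))
      have hCp := cZ_pred ψ F h3 h5 hpr ε (-(m:ℤ))
      have hLp := conj_zpow ψ F h3 h4 h5 hpr ε (-(m:ℤ)-1) (F r 1 q δ)
      have hLq := conj_zpow ψ F h3 h4 h5 hqr δ (-(m:ℤ)-1) (F r 1 p ε)
      have hsplit : ((ψ r 1)^(-(m:ℤ)-1)) ((ψ r 1) (F p ε q δ))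
          = ((ψ r 1)^(-(m:ℤ))) (F p ε q δ) := by
        conv_lhs =>
          rw [show (ψ r 1) (F p ε q δ)
            = ((ψ r 1)^(1:ℤ)) (F p ε q δ) by rw [zpow_one]]
        rw [zpow_apply_zpow, show (-(m:ℤ)-1+1) = -(m:ℤ) by ring]
      have eL : ψ p ε (cZ ψ F q δ r (-(m:ℤ)-1)) * cZ ψ F p ε r (-(m:ℤ)-1)
            * ((ψ r 1)^(-(m:ℤ)-1)) (F p ε q δ)
          = (ψ p ε (cZ ψ F q δ r (-(m:ℤ))) * cZ ψ F p ε r (-(m:ℤ))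
              * ((ψ r 1)^(-(m:ℤ))) (F p ε q δ))
            * ((ψ r 1)^(-(m:ℤ)-1)) (F r 1 q δ)
            * ((ψ r 1)^(-(m:ℤ)-1)) (ψ q δ (F r 1 p ε)) := by
        rw [hCq, hCp, ← hsplit, ← hPhiFb]
        simp only [map_mul, map_inv]
        rw [hLp, hCp]
        group
      have eR : F p ε q δ * ψ q δ (cZ ψ F p ε r (-(m:ℤ)-1))
            * cZ ψ F q δ r (-(m:ℤ)-1)
          = (F p ε q δ * ψ q δ (cZ ψ F p ε r (-(m:ℤ)))
              * cZ ψ F q δ r (-(m:ℤ)))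
            * ((ψ r 1)^(-(m:ℤ)-1)) (F r 1 q δ)
            * ((ψ r 1)^(-(m:ℤ)-1)) (ψ q δ (F r 1 p ε)) := by
        rw [hCp, hCq]
        simp only [map_mul, map_inv]
        rw [hLq, hCq]
        group
      rw [eL, eR, ih]

end pentagon





section words

variable (h1 : ∀ p q r : I, r < q → q < p → ∀ ε δ γ : ℤˣ,
      F p ε q δ * ψ q δ (F p ε r γ) * F q δ r γ
        = ψ p ε (F q δ r γ) * F p ε r γ * ψ r γ (F p ε q δ))
    (h2 : ∀ p q : I, q < p → ∀ ε δ : ℤˣ,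
      F p ε q (-δ) * ψ q (-δ) (F p ε q δ) = 1)
    (h3 : ∀ p q : I, q < p → ∀ ε δ : ℤˣ,
      ψ p (-ε) (F p ε q δ) * F p (-ε) q δ = 1)
    (h4 : ∀ p q : I, q < p → ∀ (ε δ : ℤˣ) (a : A),
      ψ p ε (ψ q δ a) * F p ε q δ = F p ε q δ * ψ q δ (ψ p ε a))
    (h5 : ∀ (r : I) (ε : ℤˣ) (a : A), ψ r (-ε) (ψ r ε a) = a)

include h2 h3 h4 h5 in
/-- (C1) : the inverse cocycle correction. -/
lemma C1_list {p : I} (ε : ℤˣ) (v : I → ℤ) (L : List I)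
    (hL : L.Pairwise (· > ·)) (hgt : ∀ i ∈ L, p < i) :
    ψ p ε (gAux ψ F p ε v L) * gAux ψ F p (-ε) v L = 1 := by
  induction L with
  | nil => simp [gAux_nil]
  | cons q L ih =>
      have hq : p < q := hgt q List.mem_cons_self
      have hLt : L.Pairwise (· > ·) := hL.of_cons
      have ih' := ih hLt fun i hi => hgt i (List.mem_cons_of_mem q hi)
      have hG : ψ p ε (gAux ψ F p ε v L) = (gAux ψ F p (-ε) v L)⁻¹ :=
        eq_inv_of_mul_eq_one_left ih'
      have hinv : ∀ a : A, ψ p ε (ψ p (-ε) a) = a := by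
        intro a
        have h := h5 p (-ε) a
        rwa [neg_neg] at h
      rw [gAux_cons, gAux_cons, neg_neg,
        conj_zpow ψ F h3 h4 h5 hq ε (-(v q)) _]
      simp only [map_mul]
      rw [hinv, hG,
        cZ_flip ψ F h2 h3 h4 h5 hq ε (v q),
        cZ_neg ψ F h3 h5 hq ε (v q)]
      simp only [map_mul, map_inv]
      group

include h3 h5 in
/-- (L6) : the recursion for `cZ` with a `±1` increment. -/
lemma cZ_step {p q : I} (hqp : q < p) (δ ε : ℤˣ) (m : ℤ) :
    cZ ψ F q (-δ) p (m + (ε:ℤ))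
      = cZ ψ F q (-δ) p m * ((ψ p 1)^(m + (ε:ℤ))) (F p (-ε) q (-δ)) := by
  rcases Int.units_eq_one_or ε with h | h <;> subst h
  · have h' := h3 p q hqp (-1) (-δ)
    rw [neg_neg] at h'
    have hF : F p (-1) q (-δ) = ((ψ p 1)⁻¹ : MulAut A) ((F p 1 q (-δ))⁻¹) := by
      apply (ψ p 1).injective
      rw [MulAut.apply_inv_self, ← eq_inv_of_mul_eq_one_left h']
    have e : ((ψ p 1)^(m+(1:ℤ))) (((ψ p 1)⁻¹ : MulAut A) ((F p 1 q (-δ))⁻¹))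
        = ((ψ p 1)^m) ((F p 1 q (-δ))⁻¹) := by
      rw [show ((ψ p 1)⁻¹ : MulAut A) ((F p 1 q (-δ))⁻¹)
          = ((ψ p 1)^(-1:ℤ)) ((F p 1 q (-δ))⁻¹) by rw [zpow_neg_one],
        zpow_apply_zpow, show m+1+(-1:ℤ) = m by ring]
    rw [Units.val_one, cZ_succ ψ F h3 h5 hqp (-δ) m, hF, e, map_inv]
  · rw [Units.val_neg, Units.val_one,
      show m + -1 = m - 1 by ring,
      cZ_pred ψ F h3 h5 hqp (-δ) m, neg_neg]

end words



section exchange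

variable (h1 : ∀ p q r : I, r < q → q < p → ∀ ε δ γ : ℤˣ,
      F p ε q δ * ψ q δ (F p ε r γ) * F q δ r γ
        = ψ p ε (F q δ r γ) * F p ε r γ * ψ r γ (F p ε q δ))
    (h2 : ∀ p q : I, q < p → ∀ ε δ : ℤˣ,
      F p ε q (-δ) * ψ q (-δ) (F p ε q δ) = 1)
    (h3 : ∀ p q : I, q < p → ∀ ε δ : ℤˣ,
      ψ p (-ε) (F p ε q δ) * F p (-ε) q δ = 1)
    (h4 : ∀ p q : I, q < p → ∀ (ε δ : ℤˣ) (a : A),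
      ψ p ε (ψ q δ a) * F p ε q δ = F p ε q δ * ψ q δ (ψ p ε a))
    (h5 : ∀ (r : I) (ε : ℤˣ) (a : A), ψ r (-ε) (ψ r ε a) = a)

include h2 h3 h4 h5 in
lemma cZ_flip' {p q : I} (hpq : p < q) (ε : ℤˣ) (n : ℤ) :
    ψ p (-ε) (cZ ψ F p ε q n) = (cZ ψ F p (-ε) q n)⁻¹ := by
  have h := cZ_flip ψ F h2 h3 h4 h5 hpq (-ε) n
  rwa [neg_neg] at h

include h1 h2 h3 h4 h5 in
/-- (C2') : the key exchange identity for the cocycle corrections. -/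
lemma C2_list {p q : I} (hqp : q < p) (ε δ : ℤˣ) (v : I → ℤ)
    (L : List I) (hL : L.Pairwise (· > ·)) (hgt : ∀ i ∈ L, q < i) (hp : p ∈ L) :
    ψ p (-ε) (gAux ψ F q δ v L)
        * gAux ψ F p ε v (L.filter fun i => p < i)
      = F p (-ε) q (-δ)
        * ψ q (-δ) (gAux ψ F p ε v (L.filter fun i => p < i))
        * gAux ψ F q δ (fun i => if i = p then v i + (ε:ℤ) else v i) L := by
  induction L with
  | nil => cases hp
  | cons r L ihL =>
      rcases List.mem_cons.mp hp with hrp | hpL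
      · -- case B : head is p
        subst hrp
        have hall : ∀ i ∈ L, i < p := fun i hi => List.rel_of_pairwise_cons hL hi
        have hfil : ((p :: L).filter fun i => p < i) = [] := by
          rw [List.filter_cons_of_neg (by simp)]
          simp only [List.filter_eq_nil_iff, decide_eq_true_eq]
          exact fun i hi => not_lt_of_gt (hall i hi)
        have hG' : gAux ψ F q δ (fun i => if i = p then v i + (ε:ℤ) else v i) L
            = gAux ψ F q δ v L := by
          refine gAux_congr ψ F q δ fun i hi => ?_
          rw [if_neg (ne_of_lt (hall i hi))]
        rw [hfil, gAux_nil, mul_one, map_one, mul_one, gAux_cons, gAux_cons, hG']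
        simp only [eq_self_iff_true, if_true]
        rw [psi_zpow ψ h5 p (-ε), Units.val_neg, zpow_apply_zpow]
        have hD1 := cZ_flip' ψ F h2 h3 h4 h5 hqp δ (v p)
        have hD2 := cZ_flip' ψ F h2 h3 h4 h5 hqp δ (v p + (ε:ℤ))
        have hstep := cZ_step ψ F h3 h5 hqp δ ε (v p)
        have eF : F p (-ε) q (-δ)
            = ((ψ p 1)^(-(v p + (ε:ℤ))))
                (((ψ p 1)^(v p + (ε:ℤ))) (F p (-ε) q (-δ))) := by
          rw [zpow_apply_zpow, show -(v p + (ε:ℤ)) + (v p + (ε:ℤ)) = 0 by ring,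
            zpow_zero]
          rfl
        rw [show -(ε:ℤ) + -(v p) = -(v p + (ε:ℤ)) by ring]
        conv_rhs => rw [eF, ← map_mul]
        refine congrArg _ ?_
        rw [hD1, hD2, hstep]
        group
      · -- case A : head r > p
        have hpr : p < r := List.rel_of_pairwise_cons hL hpL
        have hqr : q < r := hqp.trans hpr
        have hLt : L.Pairwise (· > ·) := hL.of_cons
        have ih := ihL hLt (fun i hi => hgt i (List.mem_cons_of_mem r hi)) hpL
        have hfil : ((r :: L).filter fun i => p < i)
            = r :: (L.filter fun i => p < i) :=
          List.filter_cons_of_pos (by simpa using hpr)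
        set n := v r with hn
        set Gq := gAux ψ F q δ v L with hGq
        set Gp := gAux ψ F p ε v (L.filter fun i => p < i) with hGp
        set Gq' := gAux ψ F q δ (fun i => if i = p then v i + (ε:ℤ) else v i) L
          with hGq'
        set X := cZ ψ F q (-δ) r n with hX0
        set Y := cZ ψ F p (-ε) r n with hY0
        set kq := cZ ψ F q (-δ) r (-n) with hkq0
        set kp := cZ ψ F p (-ε) r (-n) with hkp0
        have hD1 : ψ q (-δ) (cZ ψ F q δ r n) = X⁻¹ :=
          cZ_flip' ψ F h2 h3 h4 h5 hqr δ n
        have hD2 : ψ p (-ε) (cZ ψ F p ε r n) = Y⁻¹ :=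
          cZ_flip' ψ F h2 h3 h4 h5 hpr ε n
        have hX : ((ψ r 1)^(-n)) X = kq⁻¹ := by
          rw [hkq0, cZ_neg ψ F h3 h5 hqr (-δ) n, inv_inv]
        have hY : ((ψ r 1)^(-n)) Y = kp⁻¹ := by
          rw [hkp0, cZ_neg ψ F h3 h5 hpr (-ε) n, inv_inv]
        have hCp : ∀ x : A, ψ p (-ε) (((ψ r 1)^(-n)) x)
            = kp * ((ψ r 1)^(-n)) (ψ p (-ε) x) * kp⁻¹ :=
          fun x => conj_zpow ψ F h3 h4 h5 hpr (-ε) (-n) x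
        have hCq : ∀ x : A, ψ q (-δ) (((ψ r 1)^(-n)) x)
            = kq * ((ψ r 1)^(-n)) (ψ q (-δ) x) * kq⁻¹ :=
          fun x => conj_zpow ψ F h3 h4 h5 hqr (-δ) (-n) x
        have hW1 : ((ψ r 1)^(-n)) (ψ p (-ε) X)
            = kp⁻¹ * (ψ p (-ε) (kq⁻¹)) * kp := by
          have h := hCp X
          rw [hX] at h
          rw [h]; group
        have hW2 : ((ψ r 1)^(-n)) (ψ q (-δ) Y)
            = kq⁻¹ * (ψ q (-δ) (kp⁻¹)) * kq := by
          have h := hCq Y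
          rw [hY] at h
          rw [h]; group
        have hPent := cZ_pentagon ψ F h1 h3 h4 h5 hqp hpr (-ε) (-δ) (-n)
        have hPF : ψ p (-ε) kq
            = F p (-ε) q (-δ) * ψ q (-δ) kp * kq
              * (((ψ r 1)^(-n)) (F p (-ε) q (-δ)))⁻¹ * kp⁻¹ := by
          rw [← hPent, ← hkq0, ← hkp0]; group
        have hP1 : ψ p (-ε) Gq
            = F p (-ε) q (-δ) * ψ q (-δ) Gp * Gq' * Gp⁻¹ := by
          rw [← ih]; group
        rw [hfil]
        simp only [gAux_cons]
        rw [if_neg (ne_of_gt hpr)]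
        rw [← hGq, ← hGp, ← hGq', ← hn, hD1, hD2]
        rw [hCp (X⁻¹ * Gq), hCq (Y⁻¹ * Gp)]
        simp only [map_mul, map_inv]
        rw [hW1, hW2, hX, hY, hP1]
        simp only [map_mul, map_inv]
        rw [hPF]
        group

end exchange



section canonical

lemma sorted_gt_eq_of_mem_iff : ∀ {L₁ L₂ : List I}, L₁.Pairwise (· > ·) →
    L₂.Pairwise (· > ·) → (∀ i, i ∈ L₁ ↔ i ∈ L₂) → L₁ = L₂ := by
  intro L₁ L₂ h₁ h₂ h
  refine List.Perm.eq_of_pairwise' h₁ h₂ ?_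
  exact (List.perm_ext_iff_of_nodup (h₁.imp ne_of_gt) (h₂.imp ne_of_gt)).mpr h

/-- The canonical strictly descending list enumerating a finset. -/
def descList (s : Finset I) : List I := (s.sort (· ≤ ·)).reverse

lemma descList_sorted (s : Finset I) : (descList s).Pairwise (· > ·) := by
  rw [descList, List.pairwise_reverse]
  exact s.sortedLT_sort.pairwise

lemma mem_descList {s : Finset I} {i : I} : i ∈ descList s ↔ i ∈ s := by
  rw [descList, List.mem_reverse, Finset.mem_sort]

/-- The canonical cocycle correction `g p ε u`. -/
def g (p : I) (ε : ℤˣ) (u : I →₀ ℤ) : A :=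
  gAux ψ F p ε u (descList (u.support.filter fun i => p < i))

lemma gAux_eq_g (p : I) (ε : ℤˣ) (u : I →₀ ℤ) {L : List I}
    (hL : L.Pairwise (· > ·)) (hgt : ∀ i ∈ L, p < i)
    (hsupp : ∀ i, u i ≠ 0 → p < i → i ∈ L) :
    gAux ψ F p ε u L = g ψ F p ε u := by
  rw [g, gAux_filter ψ F p ε u L,
    gAux_filter ψ F p ε u (descList (u.support.filter fun i => p < i))]
  congr 1
  refine sorted_gt_eq_of_mem_iff (hL.filter _) ((descList_sorted _).filter _) ?_
  intro i
  simp only [List.mem_filter, decide_eq_true_eq, mem_descList,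
    Finset.mem_filter, Finsupp.mem_support_iff]
  constructor
  · rintro ⟨hi, hne⟩
    exact ⟨⟨hne, hgt i hi⟩, hne⟩
  · rintro ⟨⟨hne, hlt⟩, -⟩
    exact ⟨hsupp i hne hlt, hne⟩

end canonical



section finsuppG

variable (h1 : ∀ p q r : I, r < q → q < p → ∀ ε δ γ : ℤˣ,
      F p ε q δ * ψ q δ (F p ε r γ) * F q δ r γ
        = ψ p ε (F q δ r γ) * F p ε r γ * ψ r γ (F p ε q δ))
    (h2 : ∀ p q : I, q < p → ∀ ε δ : ℤˣ,
      F p ε q (-δ) * ψ q (-δ) (F p ε q δ) = 1)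
    (h3 : ∀ p q : I, q < p → ∀ ε δ : ℤˣ,
      ψ p (-ε) (F p ε q δ) * F p (-ε) q δ = 1)
    (h4 : ∀ p q : I, q < p → ∀ (ε δ : ℤˣ) (a : A),
      ψ p ε (ψ q δ a) * F p ε q δ = F p ε q δ * ψ q δ (ψ p ε a))
    (h5 : ∀ (r : I) (ε : ℤˣ) (a : A), ψ r (-ε) (ψ r ε a) = a)

lemma single_apply_ne (p i : I) (k : ℤ) (h : i ≠ p) (u : I →₀ ℤ) :
    (u + Finsupp.single p k) i = u i := by
  rw [Finsupp.add_apply, Finsupp.single_apply, if_neg (fun hh => h hh.symm),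
    add_zero]

include h2 h3 h4 h5 in
/-- (C1) at the level of `Finsupp`s. -/
lemma g_mul_inv (p : I) (ε : ℤˣ) (u : I →₀ ℤ) :
    ψ p ε (g ψ F p ε u) * g ψ F p (-ε) (u + Finsupp.single p (ε:ℤ)) = 1 := by
  set L := descList (u.support.filter fun i => p < i) with hLdef
  have hsort : L.Pairwise (· > ·) := descList_sorted _
  have hgt : ∀ i ∈ L, p < i := by
    intro i hi
    rw [hLdef, mem_descList, Finset.mem_filter] at hi
    exact hi.2
  have e1 : g ψ F p ε u = gAux ψ F p ε u L := rfl
  have e2 : g ψ F p (-ε) (u + Finsupp.single p (ε:ℤ)) = gAux ψ F p (-ε) u L := by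
    rw [← gAux_eq_g ψ F p (-ε) (u + Finsupp.single p (ε:ℤ)) hsort hgt ?_]
    · exact gAux_congr ψ F p (-ε) fun i hi =>
        (single_apply_ne p i (ε:ℤ) (ne_of_gt (hgt i hi)) u)
    · intro i hne hlt
      rw [single_apply_ne p i (ε:ℤ) (ne_of_gt hlt) u] at hne
      rw [hLdef, mem_descList, Finset.mem_filter, Finsupp.mem_support_iff]
      exact ⟨hne, hlt⟩
  rw [e1, e2]
  exact C1_list ψ F h2 h3 h4 h5 ε u L hsort hgt

include h1 h2 h3 h4 h5 in
/-- (C2) at the level of `Finsupp`s. -/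
lemma g_exchange {p q : I} (hqp : q < p) (ε δ : ℤˣ) (u : I →₀ ℤ) :
    ψ p (-ε) (g ψ F q δ u) * g ψ F p ε (u + Finsupp.single q (δ:ℤ))
      = F p (-ε) q (-δ) * ψ q (-δ) (g ψ F p ε u)
        * g ψ F q δ (u + Finsupp.single p (ε:ℤ)) := by
  set L := descList (insert p (u.support.filter fun i => q < i)) with hLdef
  have hsort : L.Pairwise (· > ·) := descList_sorted _
  have hmemL : ∀ i, i ∈ L ↔ (i = p ∨ (u i ≠ 0 ∧ q < i)) := by
    intro i
    rw [hLdef, mem_descList, Finset.mem_insert, Finset.mem_filter,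
      Finsupp.mem_support_iff]
  have hgt : ∀ i ∈ L, q < i := by
    intro i hi
    rcases (hmemL i).mp hi with rfl | hi'
    · exact hqp
    · exact hi'.2
  have hpL : p ∈ L := (hmemL p).mpr (Or.inl rfl)
  have hfs : (L.filter fun i => p < i).Pairwise (· > ·) := hsort.filter _
  have hfgt : ∀ i ∈ (L.filter fun i => p < i), p < i := by
    intro i hi
    rw [List.mem_filter, decide_eq_true_eq] at hi
    exact hi.2
  have hmain := C2_list ψ F h1 h2 h3 h4 h5 hqp ε δ u L hsort hgt hpL
  have ea : gAux ψ F q δ u L = g ψ F q δ u := by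
    refine gAux_eq_g ψ F q δ u hsort hgt fun i hne hlt => ?_
    exact (hmemL i).mpr (Or.inr ⟨hne, hlt⟩)
  have eb : gAux ψ F p ε u (L.filter fun i => p < i) = g ψ F p ε u := by
    refine gAux_eq_g ψ F p ε u hfs hfgt fun i hne hlt => ?_
    rw [List.mem_filter, decide_eq_true_eq]
    exact ⟨(hmemL i).mpr (Or.inr ⟨hne, hqp.trans hlt⟩), hlt⟩
  have ec : g ψ F p ε (u + Finsupp.single q (δ:ℤ))
      = gAux ψ F p ε u (L.filter fun i => p < i) := by
    rw [← gAux_eq_g ψ F p ε (u + Finsupp.single q (δ:ℤ)) hfs hfgt ?_]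
    · exact gAux_congr ψ F p ε fun i hi =>
        single_apply_ne q i (δ:ℤ) (ne_of_gt (hqp.trans (hfgt i hi))) u
    · intro i hne hlt
      rw [single_apply_ne q i (δ:ℤ) (ne_of_gt (hqp.trans hlt)) u] at hne
      rw [List.mem_filter, decide_eq_true_eq]
      exact ⟨(hmemL i).mpr (Or.inr ⟨hne, hqp.trans hlt⟩), hlt⟩
  have ed : gAux ψ F q δ (fun i => if i = p then u i + (ε:ℤ) else u i) L
      = g ψ F q δ (u + Finsupp.single p (ε:ℤ)) := by
    rw [← gAux_eq_g ψ F q δ (u + Finsupp.single p (ε:ℤ)) hsort hgt ?_]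
    · refine gAux_congr ψ F q δ fun i hi => ?_
      by_cases hip : i = p
      · subst hip
        rw [if_pos rfl, Finsupp.add_apply, Finsupp.single_apply, if_pos rfl]
      · rw [if_neg hip, single_apply_ne p i (ε:ℤ) hip u]
    · intro i hne hlt
      by_cases hip : i = p
      · subst hip; exact hpL
      · rw [single_apply_ne p i (ε:ℤ) hip u] at hne
        exact (hmemL i).mpr (Or.inr ⟨hne, hlt⟩)
  rw [ea, eb, ed] at hmain
  rw [ec, eb]
  exact hmain

end finsuppG



section perm

variable (I) in
def tauPerm (b : A) : Equiv.Perm (A × (I →₀ ℤ)) where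
  toFun x := (b * x.1, x.2)
  invFun x := (b⁻¹ * x.1, x.2)
  left_inv x := by simp
  right_inv x := by simp

@[simp] lemma tauPerm_apply (b : A) (x : A × (I →₀ ℤ)) :
    tauPerm I b x = (b * x.1, x.2) := rfl

lemma tauPerm_mul (b c : A) :
    tauPerm I (b * c) = tauPerm I b * tauPerm I c := by
  refine Equiv.ext fun x => ?_
  show ((b*c) * x.1, x.2) = (b * (c * x.1), x.2)
  rw [mul_assoc]

noncomputable def sigmaFun (p : I) (ε : ℤˣ) (x : A × (I →₀ ℤ)) : A × (I →₀ ℤ) :=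
  (ψ p (-ε) x.1 * g ψ F p ε x.2, x.2 + Finsupp.single p (ε:ℤ))

variable (h1 : ∀ p q r : I, r < q → q < p → ∀ ε δ γ : ℤˣ,
      F p ε q δ * ψ q δ (F p ε r γ) * F q δ r γ
        = ψ p ε (F q δ r γ) * F p ε r γ * ψ r γ (F p ε q δ))
    (h2 : ∀ p q : I, q < p → ∀ ε δ : ℤˣ,
      F p ε q (-δ) * ψ q (-δ) (F p ε q δ) = 1)
    (h3 : ∀ p q : I, q < p → ∀ ε δ : ℤˣ,
      ψ p (-ε) (F p ε q δ) * F p (-ε) q δ = 1)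
    (h4 : ∀ p q : I, q < p → ∀ (ε δ : ℤˣ) (a : A),
      ψ p ε (ψ q δ a) * F p ε q δ = F p ε q δ * ψ q δ (ψ p ε a))
    (h5 : ∀ (r : I) (ε : ℤˣ) (a : A), ψ r (-ε) (ψ r ε a) = a)

include h2 h3 h4 h5 in
lemma sigmaFun_inv (p : I) (ε : ℤˣ) (x : A × (I →₀ ℤ)) :
    sigmaFun ψ F p (-ε) (sigmaFun ψ F p ε x) = x := by
  obtain ⟨a, u⟩ := x
  have h5' : ∀ b : A, ψ p ε (ψ p (-ε) b) = b := fun b => by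
    have h := h5 p (-ε) b; rwa [neg_neg] at h
  simp only [sigmaFun]
  refine Prod.ext ?_ ?_
  · show ψ p (-(-ε)) (ψ p (-ε) a * g ψ F p ε u)
        * g ψ F p (-ε) (u + Finsupp.single p (ε:ℤ)) = a
    rw [neg_neg, map_mul, h5', mul_assoc,
      g_mul_inv ψ F h2 h3 h4 h5 p ε u, mul_one]
  · show u + Finsupp.single p (ε:ℤ) + Finsupp.single p (((-ε : ℤˣ)):ℤ) = u
    rw [Units.val_neg, add_assoc, ← Finsupp.single_add, add_neg_cancel,
      Finsupp.single_zero, add_zero]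

noncomputable def sigmaPerm (p : I) (ε : ℤˣ) : Equiv.Perm (A × (I →₀ ℤ)) where
  toFun := sigmaFun ψ F p ε
  invFun := sigmaFun ψ F p (-ε)
  left_inv := sigmaFun_inv ψ F h2 h3 h4 h5 p ε
  right_inv x := by
    have h := sigmaFun_inv ψ F h2 h3 h4 h5 p (-ε) x
    rwa [neg_neg] at h

@[simp] lemma sigmaPerm_apply (p : I) (ε : ℤˣ) (x : A × (I →₀ ℤ)) :
    sigmaPerm ψ F h2 h3 h4 h5 p ε x
      = (ψ p (-ε) x.1 * g ψ F p ε x.2, x.2 + Finsupp.single p (ε:ℤ)) := rfl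

lemma sigmaPerm_neg (p : I) (ε : ℤˣ) :
    sigmaPerm ψ F h2 h3 h4 h5 p (-ε) = (sigmaPerm ψ F h2 h3 h4 h5 p ε)⁻¹ :=
  Equiv.ext fun _ => rfl

lemma sigmaPerm_tauPerm (p : I) (ε : ℤˣ) (b : A) :
    sigmaPerm ψ F h2 h3 h4 h5 p ε * tauPerm I b
      = tauPerm I (ψ p (-ε) b) * sigmaPerm ψ F h2 h3 h4 h5 p ε := by
  refine Equiv.ext fun x => Prod.ext ?_ rfl
  show ψ p (-ε) (b * x.1) * g ψ F p ε x.2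
    = ψ p (-ε) b * (ψ p (-ε) x.1 * g ψ F p ε x.2)
  rw [map_mul, mul_assoc]

include h1 in
lemma sigmaPerm_exchange {p q : I} (hqp : q < p) (ε δ : ℤˣ) :
    sigmaPerm ψ F h2 h3 h4 h5 p ε * sigmaPerm ψ F h2 h3 h4 h5 q δ
      = sigmaPerm ψ F h2 h3 h4 h5 q δ * sigmaPerm ψ F h2 h3 h4 h5 p ε
        * tauPerm I (F p ε q δ) := by
  have hQ : ψ q (-δ) (ψ p (-ε) (F p ε q δ)) = F p (-ε) q (-δ) := by
    have ha := h3 p q hqp ε δ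
    have hb := h2 p q hqp (-ε) δ
    rw [eq_inv_of_mul_eq_one_left ha]
    rw [map_inv, eq_inv_of_mul_eq_one_right hb, inv_inv]
  have hconj : ∀ a : A, ψ p (-ε) (ψ q (-δ) a)
      = F p (-ε) q (-δ) * ψ q (-δ) (ψ p (-ε) a) * (F p (-ε) q (-δ))⁻¹ := by
    intro a
    have h := h4 p q hqp (-ε) (-δ) a
    rw [← h]; group
  refine Equiv.ext fun x => ?_
  obtain ⟨a, u⟩ := x
  refine Prod.ext ?_ ?_
  · show ψ p (-ε) (ψ q (-δ) a * g ψ F q δ u) * g ψ F p ε (u + Finsupp.single q (δ:ℤ))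
      = ψ q (-δ) (ψ p (-ε) (F p ε q δ * a) * g ψ F p ε u)
          * g ψ F q δ (u + Finsupp.single p (ε:ℤ))
    have hmain := g_exchange ψ F h1 h2 h3 h4 h5 hqp ε δ u
    have hm2 : g ψ F p ε (u + Finsupp.single q (δ:ℤ))
        = (ψ p (-ε) (g ψ F q δ u))⁻¹
          * (F p (-ε) q (-δ) * ψ q (-δ) (g ψ F p ε u)
            * g ψ F q δ (u + Finsupp.single p (ε:ℤ))) := by
      rw [← hmain]; group
    simp only [map_mul]
    rw [hconj a, hm2, hQ]
    group
  · show u + Finsupp.single q (δ:ℤ) + Finsupp.single p (ε:ℤ)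
      = u + Finsupp.single p (ε:ℤ) + Finsupp.single q (δ:ℤ)
    rw [add_assoc, add_assoc, add_comm (Finsupp.single q (δ:ℤ))]

end perm



section assemble

variable (A I) in
def shifted : Subgroup (Equiv.Perm (A × (I →₀ ℤ))) where
  carrier := {f | ∃ d : I →₀ ℤ, ∀ x, (f x).2 = x.2 + d}
  one_mem' := ⟨0, fun x => (add_zero x.2).symm⟩
  mul_mem' := by
    rintro f g' ⟨d, hd⟩ ⟨e, he⟩
    refine ⟨e + d, fun x => ?_⟩
    show (f (g' x)).2 = x.2 + (e + d)
    rw [hd (g' x), he x, add_assoc]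
  inv_mem' := by
    rintro f ⟨d, hd⟩
    refine ⟨-d, fun x => ?_⟩
    have h := hd (f⁻¹ x)
    rw [show f (f⁻¹ x) = x from Equiv.apply_symm_apply f x] at h
    rw [h]
    abel

variable (A I) in
noncomputable def shiftHom : ↥(shifted A I) →* Multiplicative (I →₀ ℤ) where
  toFun f := Multiplicative.ofAdd ((f.1 ((1 : A), (0 : I →₀ ℤ))).2)
  map_one' := by
    show Multiplicative.ofAdd (((1 : A), (0 : I →₀ ℤ)).2) = 1
    rfl
  map_mul' f g := by
    obtain ⟨f, df, hf⟩ := f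
    obtain ⟨g, dg, hg⟩ := g
    show Multiplicative.ofAdd ((f (g ((1:A), (0:I→₀ℤ)))).2) = _
    rw [hf (g ((1:A), (0:I→₀ℤ))), hg ((1:A), (0:I→₀ℤ))]
    show Multiplicative.ofAdd (0 + dg + df)
      = Multiplicative.ofAdd ((f ((1:A),(0:I→₀ℤ))).2)
        * Multiplicative.ofAdd (0 + dg)
    rw [hf ((1:A),(0:I→₀ℤ)), ← ofAdd_add]
    show Multiplicative.ofAdd (0 + dg + df) = Multiplicative.ofAdd (0 + df + (0 + dg))
    congr 1
    abel

variable (A I) in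
def tauS : A →* ↥(shifted A I) where
  toFun b := ⟨tauPerm I b, 0, fun x => (add_zero x.2).symm⟩
  map_one' := by
    refine Subtype.ext (Equiv.ext fun x => ?_)
    show ((1:A) * x.1, x.2) = x
    simp
  map_mul' b c := Subtype.ext (tauPerm_mul b c)

variable (h1 : ∀ p q r : I, r < q → q < p → ∀ ε δ γ : ℤˣ,
      F p ε q δ * ψ q δ (F p ε r γ) * F q δ r γ
        = ψ p ε (F q δ r γ) * F p ε r γ * ψ r γ (F p ε q δ))
    (h2 : ∀ p q : I, q < p → ∀ ε δ : ℤˣ,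
      F p ε q (-δ) * ψ q (-δ) (F p ε q δ) = 1)
    (h3 : ∀ p q : I, q < p → ∀ ε δ : ℤˣ,
      ψ p (-ε) (F p ε q δ) * F p (-ε) q δ = 1)
    (h4 : ∀ p q : I, q < p → ∀ (ε δ : ℤˣ) (a : A),
      ψ p ε (ψ q δ a) * F p ε q δ = F p ε q δ * ψ q δ (ψ p ε a))
    (h5 : ∀ (r : I) (ε : ℤˣ) (a : A), ψ r (-ε) (ψ r ε a) = a)

noncomputable def sigmaS (p : I) (ε : ℤˣ) : ↥(shifted A I) :=
  ⟨sigmaPerm ψ F h2 h3 h4 h5 p ε, Finsupp.single p (ε:ℤ), fun _ => rfl⟩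

noncomputable def gens : Set ↥(shifted A I) :=
  Set.range (tauS A I) ∪ Set.range (fun pe : I × ℤˣ => sigmaS ψ F h2 h3 h4 h5 pe.1 pe.2)

noncomputable def GG : Subgroup ↥(shifted A I) :=
  Subgroup.closure (gens ψ F h2 h3 h4 h5)

noncomputable def iotaG : A →* ↥(GG ψ F h2 h3 h4 h5) :=
  (tauS A I).codRestrict _ fun b =>
    Subgroup.subset_closure (Or.inl ⟨b, rfl⟩)

noncomputable def sigmaG (p : I) (ε : ℤˣ) : ↥(GG ψ F h2 h3 h4 h5) :=
  ⟨sigmaS ψ F h2 h3 h4 h5 p ε,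
    Subgroup.subset_closure (Or.inr ⟨(p, ε), rfl⟩)⟩

lemma sigmaG_neg (p : I) (ε : ℤˣ) :
    sigmaG ψ F h2 h3 h4 h5 p (-ε) = (sigmaG ψ F h2 h3 h4 h5 p ε)⁻¹ :=
  Subtype.ext (Subtype.ext (sigmaPerm_neg ψ F h2 h3 h4 h5 p ε))

lemma sigmaG_tau (p : I) (ε : ℤˣ) (b : A) :
    sigmaG ψ F h2 h3 h4 h5 p ε * iotaG ψ F h2 h3 h4 h5 b
      = iotaG ψ F h2 h3 h4 h5 (ψ p (-ε) b) * sigmaG ψ F h2 h3 h4 h5 p ε :=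
  Subtype.ext (Subtype.ext (sigmaPerm_tauPerm ψ F h2 h3 h4 h5 p ε b))

include h1 in
lemma sigmaG_exchange {p q : I} (hqp : q < p) (ε δ : ℤˣ) :
    sigmaG ψ F h2 h3 h4 h5 p ε * sigmaG ψ F h2 h3 h4 h5 q δ
      = sigmaG ψ F h2 h3 h4 h5 q δ * sigmaG ψ F h2 h3 h4 h5 p ε
        * iotaG ψ F h2 h3 h4 h5 (F p ε q δ) :=
  Subtype.ext (Subtype.ext
    (sigmaPerm_exchange ψ F h1 h2 h3 h4 h5 hqp ε δ))

lemma iotaG_injective : Function.Injective (iotaG ψ F h2 h3 h4 h5) := by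
  intro a b h
  have h2' : tauPerm I a = tauPerm I b :=
    congrArg (fun z => ((z : ↥(GG ψ F h2 h3 h4 h5)) : ↥(shifted A I)).1) h
  have h3' := congrArg (fun f : Equiv.Perm (A × (I→₀ℤ)) => (f ((1:A), (0:I→₀ℤ))).1) h2'
  simpa using h3'

lemma sigmaG_zpow (p : I) (ε : ℤˣ) :
    sigmaG ψ F h2 h3 h4 h5 p ε = (sigmaG ψ F h2 h3 h4 h5 p 1) ^ (ε:ℤ) := by
  rcases Int.units_eq_one_or ε with h | h <;> subst h
  · simp
  · rw [sigmaG_neg ψ F h2 h3 h4 h5 p 1]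
    simp

end assemble



section kernel

variable (h1 : ∀ p q r : I, r < q → q < p → ∀ ε δ γ : ℤˣ,
      F p ε q δ * ψ q δ (F p ε r γ) * F q δ r γ
        = ψ p ε (F q δ r γ) * F p ε r γ * ψ r γ (F p ε q δ))
    (h2 : ∀ p q : I, q < p → ∀ ε δ : ℤˣ,
      F p ε q (-δ) * ψ q (-δ) (F p ε q δ) = 1)
    (h3 : ∀ p q : I, q < p → ∀ ε δ : ℤˣ,
      ψ p (-ε) (F p ε q δ) * F p (-ε) q δ = 1)
    (h4 : ∀ p q : I, q < p → ∀ (ε δ : ℤˣ) (a : A),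
      ψ p ε (ψ q δ a) * F p ε q δ = F p ε q δ * ψ q δ (ψ p ε a))
    (h5 : ∀ (r : I) (ε : ℤˣ) (a : A), ψ r (-ε) (ψ r ε a) = a)

noncomputable def piD : ↥(GG ψ F h2 h3 h4 h5) →* Multiplicative (I →₀ ℤ) :=
  (shiftHom A I).comp (GG ψ F h2 h3 h4 h5).subtype

lemma piD_iota (b : A) : piD ψ F h2 h3 h4 h5 (iotaG ψ F h2 h3 h4 h5 b) = 1 :=
  rfl

lemma piD_sigma (p : I) (ε : ℤˣ) :
    piD ψ F h2 h3 h4 h5 (sigmaG ψ F h2 h3 h4 h5 p ε)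
      = Multiplicative.ofAdd (Finsupp.single p (ε:ℤ)) := by
  show Multiplicative.ofAdd ((0:I→₀ℤ) + Finsupp.single p (ε:ℤ)) = _
  rw [zero_add]

lemma piD_surjective : Function.Surjective (piD ψ F h2 h3 h4 h5) := by
  have key : ∀ d0 : I →₀ ℤ, ∃ gg,
      piD ψ F h2 h3 h4 h5 gg = Multiplicative.ofAdd d0 := by
    intro d0
    induction d0 using Finsupp.induction with
    | zero => exact ⟨1, map_one _⟩
    | single_add a b f _ _ ih =>
        obtain ⟨gg, hgg⟩ := ih
        refine ⟨(sigmaG ψ F h2 h3 h4 h5 a 1) ^ b * gg, ?_⟩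
        have e : (Multiplicative.ofAdd (Finsupp.single a (1:ℤ))) ^ b
            = Multiplicative.ofAdd (Finsupp.single a b) := by
          show Multiplicative.ofAdd (b • Finsupp.single a (1:ℤ)) = _
          rw [Finsupp.smul_single, smul_eq_mul, mul_one]
        rw [map_mul, map_zpow, hgg, piD_sigma, Units.val_one, e, ← ofAdd_add]
  intro d
  obtain ⟨gg, hgg⟩ := key (Multiplicative.toAdd d)
  exact ⟨gg, hgg⟩

include h5 in
lemma conj_iota (gg : ↥(GG ψ F h2 h3 h4 h5)) :
    (∀ a : A, ∃ b, gg * iotaG ψ F h2 h3 h4 h5 a * gg⁻¹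
        = iotaG ψ F h2 h3 h4 h5 b)
      ∧ (∀ a : A, ∃ b, gg⁻¹ * iotaG ψ F h2 h3 h4 h5 a * gg
        = iotaG ψ F h2 h3 h4 h5 b) := by
  obtain ⟨x, hx⟩ := gg
  induction hx using Subgroup.closure_induction with
  | mem x hxg =>
      have hx' : x ∈ GG ψ F h2 h3 h4 h5 := Subgroup.subset_closure hxg
      rcases hxg with ⟨b, rfl⟩ | ⟨⟨p, ε⟩, rfl⟩
      · have he : (⟨tauS A I b, hx'⟩ : ↥(GG ψ F h2 h3 h4 h5))
            = iotaG ψ F h2 h3 h4 h5 b := rfl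
        rw [he]
        constructor <;> intro a
        · exact ⟨b * a * b⁻¹, by rw [← map_inv, ← map_mul, ← map_mul]⟩
        · exact ⟨b⁻¹ * a * b, by rw [← map_inv, ← map_mul, ← map_mul]⟩
      · have he : (⟨sigmaS ψ F h2 h3 h4 h5 p ε, hx'⟩ : ↥(GG ψ F h2 h3 h4 h5))
            = sigmaG ψ F h2 h3 h4 h5 p ε := rfl
        rw [he]
        constructor <;> intro a
        · exact ⟨ψ p (-ε) a, by
            rw [sigmaG_tau ψ F h2 h3 h4 h5 p ε a]; group⟩
        · refine ⟨ψ p ε a, ?_⟩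
          have h := sigmaG_tau ψ F h2 h3 h4 h5 p ε (ψ p ε a)
          rw [h5 p ε a] at h
          rw [mul_assoc, ← h]; group
  | one =>
      have he : (⟨(1 : ↥(shifted A I)), one_mem _⟩
          : ↥(GG ψ F h2 h3 h4 h5)) = 1 := rfl
      rw [he]
      constructor <;> intro a <;> exact ⟨a, by group⟩
  | mul x y hx hy ihx ihy =>
      have hex : (⟨x * y, mul_mem hx hy⟩ : ↥(GG ψ F h2 h3 h4 h5))
          = ⟨x, hx⟩ * ⟨y, hy⟩ := rfl
      rw [hex]
      constructor <;> intro a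
      · obtain ⟨b, hb⟩ := ihy.1 a
        obtain ⟨c, hc⟩ := ihx.1 b
        refine ⟨c, ?_⟩
        rw [← hc, ← hb]; group
      · obtain ⟨b, hb⟩ := ihx.2 a
        obtain ⟨c, hc⟩ := ihy.2 b
        refine ⟨c, ?_⟩
        rw [← hc, ← hb]; group
  | inv x hx ihx =>
      have hex : (⟨x⁻¹, inv_mem hx⟩ : ↥(GG ψ F h2 h3 h4 h5))
          = (⟨x, hx⟩ : ↥(GG ψ F h2 h3 h4 h5))⁻¹ := rfl
      rw [hex]
      constructor <;> intro a
      · obtain ⟨b, hb⟩ := ihx.2 a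
        exact ⟨b, by rw [← hb]; group⟩
      · obtain ⟨b, hb⟩ := ihx.1 a
        exact ⟨b, by rw [← hb]; group⟩

include h1 h5 in
lemma ker_le_range :
    (piD ψ F h2 h3 h4 h5).ker ≤ (iotaG ψ F h2 h3 h4 h5).range := by
  set N := (iotaG ψ F h2 h3 h4 h5).range with hNdef
  haveI hN : N.Normal := by
    constructor
    rintro n ⟨a, rfl⟩ g
    obtain ⟨b, hb⟩ := (conj_iota ψ F h2 h3 h4 h5 g).1 a
    exact ⟨b, hb.symm⟩
  set mk := QuotientGroup.mk' N with hmkdef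
  have hτ1 : ∀ b : A, mk (iotaG ψ F h2 h3 h4 h5 b) = 1 := fun b =>
    (QuotientGroup.eq_one_iff _).mpr ⟨b, rfl⟩
  -- commutativity of the quotient
  have hcomm : ∀ x y : ↥(GG ψ F h2 h3 h4 h5), Commute (mk x) (mk y) := by
    have hgen : ∀ x (hx : x ∈ gens ψ F h2 h3 h4 h5)
        (y : ↥(GG ψ F h2 h3 h4 h5)),
        Commute (mk ⟨x, Subgroup.subset_closure hx⟩) (mk y) := by
      intro x hx y
      obtain ⟨y, hy⟩ := y
      induction hy using Subgroup.closure_induction with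
      | mem y hyg =>
          rcases hx with ⟨b, rfl⟩ | ⟨⟨p, ε⟩, rfl⟩
          · rw [show (⟨tauS A I b, _⟩ : ↥(GG ψ F h2 h3 h4 h5))
                = iotaG ψ F h2 h3 h4 h5 b from rfl, hτ1]
            exact Commute.one_left _
          · rcases hyg with ⟨c, rfl⟩ | ⟨⟨p', ε'⟩, rfl⟩
            · rw [show (⟨tauS A I c, _⟩ : ↥(GG ψ F h2 h3 h4 h5))
                  = iotaG ψ F h2 h3 h4 h5 c from rfl, hτ1]
              exact Commute.one_right _
            · rw [show (⟨sigmaS ψ F h2 h3 h4 h5 p ε, _⟩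
                    : ↥(GG ψ F h2 h3 h4 h5))
                  = sigmaG ψ F h2 h3 h4 h5 p ε from rfl,
                show (⟨sigmaS ψ F h2 h3 h4 h5 p' ε', _⟩
                    : ↥(GG ψ F h2 h3 h4 h5))
                  = sigmaG ψ F h2 h3 h4 h5 p' ε' from rfl]
              rcases lt_trichotomy p' p with hlt | heq | hlt
              · have hex := sigmaG_exchange ψ F h1 h2 h3 h4 h5 hlt ε ε'
                unfold Commute SemiconjBy
                simp only [← map_mul]
                rw [hex]
                simp only [map_mul, hτ1, mul_one]
              · subst heq
                rw [sigmaG_zpow ψ F h2 h3 h4 h5 p' ε,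
                  sigmaG_zpow ψ F h2 h3 h4 h5 p' ε']
                exact Commute.map (Commute.zpow_zpow_self _ _ _) mk
              · have hex := sigmaG_exchange ψ F h1 h2 h3 h4 h5 hlt ε' ε
                unfold Commute SemiconjBy
                simp only [← map_mul]
                rw [hex]
                simp only [map_mul, hτ1, mul_one]
      | one =>
          rw [show (⟨(1 : ↥(shifted A I)), _⟩ : ↥(GG ψ F h2 h3 h4 h5))
              = 1 from rfl, map_one]
          exact Commute.one_right _
      | mul y z hy hz ihy ihz =>
          rw [show (⟨y * z, mul_mem hy hz⟩ : ↥(GG ψ F h2 h3 h4 h5))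
              = ⟨y, hy⟩ * ⟨z, hz⟩ from rfl, map_mul]
          exact Commute.mul_right ihy ihz
      | inv y hy ihy =>
          rw [show (⟨y⁻¹, inv_mem hy⟩ : ↥(GG ψ F h2 h3 h4 h5))
              = (⟨y, hy⟩ : ↥(GG ψ F h2 h3 h4 h5))⁻¹ from rfl, map_inv]
          exact Commute.inv_right ihy
    intro x y
    obtain ⟨x, hx⟩ := x
    induction hx using Subgroup.closure_induction with
    | mem x hxg => exact hgen x hxg y
    | one =>
        rw [show (⟨(1 : ↥(shifted A I)), _⟩ : ↥(GG ψ F h2 h3 h4 h5))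
            = 1 from rfl, map_one]
        exact Commute.one_left _
    | mul x z hx hz ihx ihz =>
        rw [show (⟨x * z, mul_mem hx hz⟩ : ↥(GG ψ F h2 h3 h4 h5))
            = ⟨x, hx⟩ * ⟨z, hz⟩ from rfl, map_mul]
        exact Commute.mul_left ihx ihz
    | inv x hx ihx =>
        rw [show (⟨x⁻¹, inv_mem hx⟩ : ↥(GG ψ F h2 h3 h4 h5))
            = (⟨x, hx⟩ : ↥(GG ψ F h2 h3 h4 h5))⁻¹ from rfl, map_inv]
        exact Commute.inv_left ihx
  letI : CommGroup (↥(GG ψ F h2 h3 h4 h5) ⧸ N) :=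
    { (inferInstance : Group (↥(GG ψ F h2 h3 h4 h5) ⧸ N)) with
      mul_comm := fun x y => by
        induction x using QuotientGroup.induction_on with
        | _ x =>
        induction y using QuotientGroup.induction_on with
        | _ y => exact hcomm x y }
  -- the retraction
  let ρ : (I →₀ ℤ) →+ Additive (↥(GG ψ F h2 h3 h4 h5) ⧸ N) :=
    Finsupp.liftAddHom fun i =>
      (zmultiplesHom _) (Additive.ofMul (mk (sigmaG ψ F h2 h3 h4 h5 i 1)))
  let Hom2 : ↥(GG ψ F h2 h3 h4 h5) →* ↥(GG ψ F h2 h3 h4 h5) ⧸ N :=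
    (AddMonoidHom.toMultiplicativeLeft ρ).comp (piD ψ F h2 h3 h4 h5)
  have hHom2sig : ∀ (p : I) (ε : ℤˣ),
      Hom2 (sigmaG ψ F h2 h3 h4 h5 p ε) = mk (sigmaG ψ F h2 h3 h4 h5 p ε) := by
    intro p ε
    show (AddMonoidHom.toMultiplicativeLeft ρ)
        (piD ψ F h2 h3 h4 h5 (sigmaG ψ F h2 h3 h4 h5 p ε)) = _
    rw [piD_sigma]
    show Additive.toMul (ρ (Finsupp.single p (ε:ℤ))) = _
    rw [show ρ (Finsupp.single p (ε:ℤ))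
        = (ε:ℤ) • Additive.ofMul (mk (sigmaG ψ F h2 h3 h4 h5 p 1)) by
      exact Finsupp.liftAddHom_apply_single _ p (ε:ℤ)]
    show (mk (sigmaG ψ F h2 h3 h4 h5 p 1)) ^ (ε:ℤ) = _
    rw [← map_zpow, ← sigmaG_zpow]
  have hHom2 : ∀ g : ↥(GG ψ F h2 h3 h4 h5), Hom2 g = mk g := by
    rintro ⟨x, hx⟩
    induction hx using Subgroup.closure_induction with
    | mem x hxg =>
        rcases hxg with ⟨b, rfl⟩ | ⟨⟨p, ε⟩, rfl⟩
        · rw [show (⟨tauS A I b, _⟩ : ↥(GG ψ F h2 h3 h4 h5))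
              = iotaG ψ F h2 h3 h4 h5 b from rfl, hτ1]
          show (AddMonoidHom.toMultiplicativeLeft ρ)
              (piD ψ F h2 h3 h4 h5 (iotaG ψ F h2 h3 h4 h5 b)) = 1
          rw [piD_iota]
          exact map_one _
        · rw [show (⟨sigmaS ψ F h2 h3 h4 h5 p ε, _⟩ : ↥(GG ψ F h2 h3 h4 h5))
              = sigmaG ψ F h2 h3 h4 h5 p ε from rfl]
          exact hHom2sig p ε
    | one => rw [show (⟨(1 : ↥(shifted A I)), _⟩ : ↥(GG ψ F h2 h3 h4 h5))
          = 1 from rfl, map_one, map_one]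
    | mul x z hx hz ihx ihz =>
        rw [show (⟨x * z, mul_mem hx hz⟩ : ↥(GG ψ F h2 h3 h4 h5))
            = ⟨x, hx⟩ * ⟨z, hz⟩ from rfl, map_mul, map_mul, ihx, ihz]
    | inv x hx ihx =>
        rw [show (⟨x⁻¹, inv_mem hx⟩ : ↥(GG ψ F h2 h3 h4 h5))
            = (⟨x, hx⟩ : ↥(GG ψ F h2 h3 h4 h5))⁻¹ from rfl, map_inv, map_inv,
          ihx]
  intro g hg
  have h1' : mk g = 1 := by
    rw [← hHom2 g]
    show (AddMonoidHom.toMultiplicativeLeft ρ) (piD ψ F h2 h3 h4 h5 g) = 1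
    rw [MonoidHom.mem_ker.mp hg]
    exact map_one _
  exact (QuotientGroup.eq_one_iff g).mp h1'

end kernel


end Schreier1843




/-- Given a group `A`, a linearly ordered set `I`, automorphisms `ψ (i, ε)` of
`A` and elements `F (p, ε; q, δ) ∈ A` (for `p > q` in `I`, signs `ε, δ = ±1`)
satisfying the extension conditions (1)-(5), there exists a Schreier extension
`G` of `A` by the free abelian group on `I` (written multiplicatively),
together with a map `s : I → G` lifting the free generators such that
`ι a · s i = s i · ι (ψ (i, +1) a)`, `ι a · (s i)⁻¹ = (s i)⁻¹ · ι (ψ (i, −1) a)`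
and `s(p)^ε · s(q)^δ = s(q)^δ · s(p)^ε · ι (F (p, ε; q, δ))` for `p > q`. -/
theorem exists_schreierExtension_by_freeAbelian {A : Type u} [Group A]
    {I : Type v} [LinearOrder I]
    (ψ : I → ℤˣ → MulAut A) (F : I → ℤˣ → I → ℤˣ → A)
    (h1 : ∀ p q r : I, r < q → q < p → ∀ ε δ γ : ℤˣ,
      F p ε q δ * ψ q δ (F p ε r γ) * F q δ r γ
        = ψ p ε (F q δ r γ) * F p ε r γ * ψ r γ (F p ε q δ))
    (h2 : ∀ p q : I, q < p → ∀ ε δ : ℤˣ,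
      F p ε q (-δ) * ψ q (-δ) (F p ε q δ) = 1)
    (h3 : ∀ p q : I, q < p → ∀ ε δ : ℤˣ,
      ψ p (-ε) (F p ε q δ) * F p (-ε) q δ = 1)
    (h4 : ∀ p q : I, q < p → ∀ (ε δ : ℤˣ) (a : A),
      ψ p ε (ψ q δ a) * F p ε q δ = F p ε q δ * ψ q δ (ψ p ε a))
    (h5 : ∀ (r : I) (ε : ℤˣ) (a : A), ψ r (-ε) (ψ r ε a) = a) :
    ∃ (G : Type (max u v)) (instG : Group G),
      letI := instG
      ∃ (ι : A →* G) (π : G →* Multiplicative (FreeAbelianGroup I)) (s : I → G),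
        Function.Injective ι ∧ Function.Surjective π ∧
        ι.range = π.ker ∧
        (∀ i : I, π (s i) = Multiplicative.ofAdd (FreeAbelianGroup.of i)) ∧
        (∀ (i : I) (a : A), ι a * s i = s i * ι (ψ i 1 a)) ∧
        (∀ (i : I) (a : A), ι a * (s i)⁻¹ = (s i)⁻¹ * ι (ψ i (-1) a)) ∧
        (∀ p q : I, q < p → ∀ ε δ : ℤˣ,
          s p ^ (ε : ℤ) * s q ^ (δ : ℤ)
            = s q ^ (δ : ℤ) * s p ^ (ε : ℤ) * ι (F p ε q δ)) := by

  classical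
  refine ⟨↥(Schreier1843.GG ψ F h2 h3 h4 h5), inferInstance, Schreier1843.iotaG ψ F h2 h3 h4 h5, ?_⟩
  set e : Multiplicative (I →₀ ℤ) ≃* Multiplicative (FreeAbelianGroup I) :=
    AddEquiv.toMultiplicative (FreeAbelianGroup.equivFinsupp I).symm with hedef
  refine ⟨e.toMonoidHom.comp (Schreier1843.piD ψ F h2 h3 h4 h5),
    fun i => Schreier1843.sigmaG ψ F h2 h3 h4 h5 i 1, ?_, ?_, ?_, ?_, ?_, ?_, ?_⟩
  · exact Schreier1843.iotaG_injective ψ F h2 h3 h4 h5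
  · exact e.surjective.comp (Schreier1843.piD_surjective ψ F h2 h3 h4 h5)
  · ext gg
    simp only [MonoidHom.mem_ker, MonoidHom.comp_apply, MulEquiv.coe_toMonoidHom,
      EmbeddingLike.map_eq_one_iff]
    constructor
    · rintro ⟨a, rfl⟩
      exact Schreier1843.piD_iota ψ F h2 h3 h4 h5 a
    · intro hk
      exact Schreier1843.ker_le_range ψ F h1 h2 h3 h4 h5 (MonoidHom.mem_ker.mpr hk)
  · intro i
    show e (Schreier1843.piD ψ F h2 h3 h4 h5 (Schreier1843.sigmaG ψ F h2 h3 h4 h5 i 1)) = _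
    rw [Schreier1843.piD_sigma, Units.val_one]
    show Multiplicative.ofAdd
        ((FreeAbelianGroup.equivFinsupp I).symm (Finsupp.single i 1)) = _
    congr 1
    rw [AddEquiv.symm_apply_eq]
    exact (FreeAbelianGroup.toFinsupp_of i).symm
  · intro i a
    have h := Schreier1843.sigmaG_tau ψ F h2 h3 h4 h5 i 1 (ψ i 1 a)
    rw [h5 i 1 a] at h
    exact h.symm
  · intro i a
    have h := Schreier1843.sigmaG_tau ψ F h2 h3 h4 h5 i (-1) (ψ i (-1) a)
    have h5' := h5 i (-1) a
    rw [neg_neg] at h5'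
    rw [neg_neg, h5', Schreier1843.sigmaG_neg ψ F h2 h3 h4 h5 i 1] at h
    exact h.symm
  · intro p q hqp ε δ
    rw [← Schreier1843.sigmaG_zpow ψ F h2 h3 h4 h5 p ε, ← Schreier1843.sigmaG_zpow ψ F h2 h3 h4 h5 q δ]
    exact Schreier1843.sigmaG_exchange ψ F h1 h2 h3 h4 h5 hqp ε δ
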